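/- Let n ≥ 1, let (a_0,…,a_k) be nonnegative integers, and fix an index i with 1 ≤ i ≤ k and a_i ≥ 1 (when i = k, interpret references to a_{k+1} by extending the tuple with a_{k+1} = 0). Then Q_n(a_0,…,a_k) = 2·Q_{n-1}(a_0,…,a_k) + Q_{n-1}(…, a_{i-1} + 1, a_i − 1, …) + Q_{n-1}(…, a_i − 1, a_{i+1} + 1, …) − Q_{n-1}(…, a_{i-1} + 1, a_i, …) − Q_{n-1}(…, a_i + 1, …) − Q_{n-1}(…, a_i, a_{i+1} + 1, …), where in each term only the indicated entries of the tuple are changed. -/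

import Mathlib

/-!
Count Dyck paths by length. If `C h` is the generating function of the paths of height `< h`,
the first-return decomposition `p = 1 :: q ++ -1 :: r` gives `C (h + 1) = 1 + X² C h C (h + 1)`,
and `E h = C (h + 1) - C h` counts the paths of height exactly `h`. Tuples of paths with
prescribed heights have the product of the `E`'s as generating function, so `Q_n^{(x)}(a)` is the
coefficient of `X^{2n}` in `W · E_h^b E_{h+1}^c E_{h+2}^d` with `W` independent of `b, c, d`.
Eliminating the `C`'s from three consecutive recurrences gives
`E_{h+1} = X² (E_h + 2 E_{h+1} + E_{h+2}) - X² E_{h+1} (E_h + E_{h+1} + E_{h+2})`;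
multiplying by `W E_h^b E_{h+1}^{c-1} E_{h+2}^d` yields the recursion for each `x`, and summing
over `x` yields it for `Q`: the extra term `x = n` of `Q_n` vanishes because a path of height `h`
has length at least `2h`.
-/

/-- A Dyck path: a finite sequence of ±1 steps with all partial sums nonnegative
and total sum zero. -/
def IsDyckPath (p : List ℤ) : Prop :=
  (∀ s ∈ p, s = 1 ∨ s = -1) ∧ (∀ k, 0 ≤ (p.take k).sum) ∧ p.sum = 0

/-- The height of a path: the maximum of its partial sums (0 for the empty path). -/
def pathHeight (p : List ℤ) : ℕ :=
  Finset.sup (Finset.range (p.length + 1)) (fun k => ((p.take k).sum).toNat)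

/-- Super-Catalan numbers `T(m,n) = (2m)!(2n)!/(2·m!·n!·(m+n)!)`, as a rational number. -/
def superCatalan (m n : ℕ) : ℚ :=
  ((2 * m).factorial * (2 * n).factorial : ℚ) /
    (2 * m.factorial * n.factorial * (m + n).factorial)

/-- `G n m k`: the number of `m`-tuples of Dyck paths of total length `2n` all of whose
pairwise height differences are at most `k` (this is `0` when `n < 0`). -/
noncomputable def G (n : ℤ) (m k : ℕ) : ℕ :=
  Nat.card {p : Fin m → List ℤ //
    (∀ i, IsDyckPath (p i)) ∧
    (∑ i, ((p i).length : ℤ)) = 2 * n ∧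
    ∀ i j, |(pathHeight (p i) : ℤ) - (pathHeight (p j) : ℤ)| ≤ (k : ℤ)}

/-- The path-height function `P n [a₁,…,aₘ]`: the number of `m`-tuples of Dyck paths
of total length `2n` whose `i`-th path has height `aᵢ`. -/
noncomputable def P (n : ℤ) (a : List ℕ) : ℕ :=
  Nat.card {p : Fin a.length → List ℤ //
    (∀ i, IsDyckPath (p i)) ∧
    (∑ i, ((p i).length : ℤ)) = 2 * n ∧
    ∀ i, pathHeight (p i) = a.get i}

/-- `Qx n x [a₀,…,a_k]` is `P n` evaluated at `a₀` copies of `x`, `a₁` copies of `x+1`, …,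
`a_k` copies of `x+k`. -/
noncomputable def Qx (n : ℤ) (x : ℕ) (a : List ℕ) : ℕ :=
  P n (a.zipIdx.flatMap fun q => List.replicate q.1 (x + q.2))

/-- The grouped path-height function `Q n a = ∑_{x=0}^∞ Qx n x a`. Whenever some entry
of `a` is positive (as in every application below) all terms with `x > n` vanish, since
a Dyck path of height at least `x` has length at least `2x`; so the infinite sum equals
its truncation at `x = n`. -/
noncomputable def Q (n : ℤ) (a : List ℕ) : ℕ :=
  ∑ x ∈ Finset.range (n.toNat + 1), Qx n x a

open PowerSeries Finset.HasAntidiagonal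

section CountingSeries

variable {α β : Type*}

-- `Nat.card` is `0` on infinite fibres, hence the finiteness hypotheses below.
noncomputable def countingSeries (size : α → ℕ) : PowerSeries ℤ :=
  mk fun m => Nat.card {a // size a = m}

lemma coeff_countingSeries (size : α → ℕ) (m : ℕ) :
    coeff m (countingSeries size) = Nat.card {a // size a = m} :=
  coeff_mk _ _

def fiberEquiv {sa : α → ℕ} {sb : β → ℕ} (e : α ≃ β) (h : ∀ a, sb (e a) = sa a) (m : ℕ) :
    {a // sa a = m} ≃ {b // sb b = m} :=
  e.subtypeEquiv fun a => by rw [h]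

lemma countingSeries_congr {sa : α → ℕ} {sb : β → ℕ} (e : α ≃ β) (h : ∀ a, sb (e a) = sa a) :
    countingSeries sb = countingSeries sa := by
  ext m
  simp only [coeff_countingSeries]
  exact congrArg _ (Nat.card_congr (fiberEquiv e h m)).symm

lemma countingSeries_of_unique [Unique α] {size : α → ℕ} (h : ∀ a, size a = 0) :
    countingSeries size = 1 := by
  ext m
  rw [coeff_countingSeries, coeff_one]
  split_ifs with hm
  · subst hm
    have : Unique {a // size a = 0} :=
      ⟨⟨⟨default, h _⟩⟩, fun a => Subtype.ext (Unique.eq_default _)⟩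
    simp
  · have : IsEmpty {a // size a = m} := ⟨fun a => hm (a.2 ▸ h a.1)⟩
    simp

lemma countingSeries_add_const (size : α → ℕ) (k : ℕ) :
    countingSeries (fun a => size a + k) = X ^ k * countingSeries size := by
  ext m
  rw [coeff_X_pow_mul', coeff_countingSeries]
  split_ifs with hk
  · rw [coeff_countingSeries]
    exact congrArg _ (Nat.card_congr (Equiv.subtypeEquivRight fun a => by omega))
  · have : IsEmpty {a // size a + k = m} := ⟨fun a => hk (by omega)⟩
    simp

lemma countingSeries_eq_add {γ : Type*} {sa : α → ℕ} {sb : β → ℕ} {s : γ → ℕ} (e : α ⊕ β ≃ γ)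
    (h : ∀ x, s (e x) = Sum.elim sa sb x) (hfin : ∀ m, Finite {c // s c = m}) :
    countingSeries s = countingSeries sa + countingSeries sb := by
  ext m
  let e' : {c // s c = m} ≃ {a // sa a = m} ⊕ {b // sb b = m} :=
    (fiberEquiv e h m).symm.trans Equiv.subtypeSum
  have := hfin m
  have := Finite.of_equiv _ e'
  have := Finite.sum_left (α := {a // sa a = m}) {b // sb b = m}
  have := Finite.sum_right {a // sa a = m} (β := {b // sb b = m})
  rw [map_add, coeff_countingSeries, coeff_countingSeries, coeff_countingSeries,
    Nat.card_congr e', Nat.card_sum, Nat.cast_add]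

def prodFiberEquiv (sa : α → ℕ) (sb : β → ℕ) (m : ℕ) :
    {x : α × β // sa x.1 + sb x.2 = m} ≃
      Σ ij : antidiagonal m, {a // sa a = ij.1.1} × {b // sb b = ij.1.2} where
  toFun x := ⟨⟨(sa x.1.1, sb x.1.2), mem_antidiagonal.mpr x.2⟩, ⟨x.1.1, rfl⟩, ⟨x.1.2, rfl⟩⟩
  invFun y := ⟨(y.2.1.1, y.2.2.1), by rw [y.2.1.2, y.2.2.2]; exact mem_antidiagonal.mp y.1.2⟩
  left_inv _ := rfl
  right_inv := by
    rintro ⟨⟨⟨i, j⟩, hij⟩, ⟨a, ha : sa a = i⟩, ⟨b, hb : sb b = j⟩⟩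
    subst ha hb
    rfl

lemma countingSeries_prod {sa : α → ℕ} {sb : β → ℕ} (ha : ∀ m, Finite {a // sa a = m})
    (hb : ∀ m, Finite {b // sb b = m}) :
    countingSeries (fun x : α × β => sa x.1 + sb x.2) = countingSeries sa * countingSeries sb := by
  ext m
  rw [coeff_mul, coeff_countingSeries, Nat.card_congr (prodFiberEquiv sa sb m), Nat.card_sigma,
    ← Finset.sum_coe_sort (antidiagonal m)]
  push_cast [Nat.card_prod, coeff_countingSeries]
  rfl

end CountingSeries

lemma abs_sum_le_length {l : List ℤ} (hl : ∀ s ∈ l, s = 1 ∨ s = -1) : |l.sum| ≤ l.length := by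
  induction l with
  | nil => simp
  | cons s l ih =>
    have := ih fun t ht => hl t (by simp [ht])
    rw [abs_le] at this ⊢
    rw [List.sum_cons, List.length_cons, Nat.cast_succ]
    rcases hl s List.mem_cons_self with rfl | rfl <;> omega

lemma finite_length_le_pm_one (m : ℕ) :
    {p : List ℤ | p.length ≤ m ∧ ∀ s ∈ p, s = 1 ∨ s = -1}.Finite := by
  refine ((List.finite_length_le Bool m).image (List.map fun b => if b then 1 else -1)).subset ?_
  rintro p ⟨hlen, hp⟩
  refine ⟨p.map (· = 1), by simpa using hlen, ?_⟩
  rw [List.map_map]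
  conv_rhs => rw [← List.map_id p]
  exact List.map_congr_left fun s hs => by rcases hp s hs with rfl | rfl <;> simp

lemma natCast_pathHeight_le_iff (p : List ℤ) (m : ℤ) :
    (pathHeight p : ℤ) ≤ m ↔ ∀ k, (p.take k).sum ≤ m := by
  unfold pathHeight
  constructor
  · intro H k
    have hk : min k p.length ∈ Finset.range (p.length + 1) := Finset.mem_range.2 (by omega)
    have := Finset.le_sup (f := fun k => ((p.take k).sum).toNat) hk
    rw [← List.take_eq_take_min] at this
    exact (Int.self_le_toNat _).trans (by omega)
  · intro H
    have hm : 0 ≤ m := by simpa using H 0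
    calc _ ≤ ((m.toNat : ℕ) : ℤ) :=
          Nat.cast_le.2 (Finset.sup_le fun k _ => Int.toNat_le_toNat (H k))
      _ = m := Int.toNat_of_nonneg hm

lemma two_mul_pathHeight_le {p : List ℤ} (hp : IsDyckPath p) : 2 * pathHeight p ≤ p.length := by
  suffices (pathHeight p : ℤ) ≤ (p.length / 2 : ℕ) by omega
  rw [natCast_pathHeight_le_iff]
  intro k
  have htake := abs_sum_le_length (l := p.take k) fun s hs => hp.1 s (List.mem_of_mem_take hs)
  have hdrop := abs_sum_le_length (l := p.drop k) fun s hs => hp.1 s (List.mem_of_mem_drop hs)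
  have hsum : (p.take k).sum + (p.drop k).sum = 0 := by
    rw [← List.sum_append, List.take_append_drop, hp.2.2]
  simp only [List.length_take, List.length_drop, abs_le] at htake hdrop
  omega

lemma forall_sum_take_cons_append_iff {q r : List ℤ} (hq : q.sum = 0) (P : ℤ → Prop) :
    (∀ k, P ((1 :: q ++ -1 :: r).take k).sum) ↔
      (∀ k, P (1 + (q.take k).sum)) ∧ ∀ k, P (r.take k).sum := by
  have h₁ : ∀ k ≤ q.length, ((1 :: q ++ -1 :: r).take (k + 1)).sum = 1 + (q.take k).sum := by
    intro k hk
    simp [List.take_append, show k - q.length = 0 by omega]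
  have h₂ : ∀ j, ((1 :: q ++ -1 :: r).take (q.length + 2 + j)).sum = (r.take j).sum := by
    intro j
    rw [show q.length + 2 + j = q.length + 1 + j + 1 by omega]
    simp [List.take_append, List.take_of_length_le (show q.length ≤ q.length + 1 + j by omega),
      show q.length + 1 + j - q.length = j + 1 by omega, hq]
  constructor
  · intro H
    refine ⟨fun k => ?_, fun j => h₂ j ▸ H _⟩
    rcases le_total k q.length with hk | hk
    · exact h₁ k hk ▸ H _
    · have := H (q.length + 1)
      rwa [h₁ _ le_rfl, List.take_length, ← List.take_of_length_le hk] at this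
  · rintro ⟨H₁, H₂⟩ (_ | k)
    · simpa using H₂ 0
    · rcases le_or_gt k q.length with hk | hk
      · exact h₁ k hk ▸ H₁ k
      · obtain ⟨j, rfl⟩ : ∃ j, k = q.length + 1 + j := ⟨k - q.length - 1, by omega⟩
        exact (show q.length + 1 + j + 1 = q.length + 2 + j by omega) ▸ h₂ j ▸ H₂ j

lemma isDyckPath_cons_append_iff {q r : List ℤ} (hq : IsDyckPath q) :
    IsDyckPath (1 :: q ++ -1 :: r) ↔ IsDyckPath r := by
  unfold IsDyckPath
  rw [forall_sum_take_cons_append_iff hq.2.2 (0 ≤ ·)]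
  have : ∀ k, 0 ≤ 1 + (q.take k).sum := fun k => by have := hq.2.1 k; omega
  simp only [List.forall_mem_append, List.forall_mem_cons, List.sum_append, List.sum_cons, hq.2.2,
    this, true_or, or_true, true_and, implies_true, add_zero, add_neg_cancel_left]
  exact and_congr_left' (and_iff_right hq.1)

lemma natCast_pathHeight_cons_append_le_iff {q r : List ℤ} (hq : IsDyckPath q) (m : ℤ) :
    (pathHeight (1 :: q ++ -1 :: r) : ℤ) ≤ m ↔
      (pathHeight q : ℤ) + 1 ≤ m ∧ (pathHeight r : ℤ) ≤ m := by
  rw [natCast_pathHeight_le_iff, forall_sum_take_cons_append_iff hq.2.2 (· ≤ m),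
    natCast_pathHeight_le_iff r, ← le_sub_iff_add_le, natCast_pathHeight_le_iff]
  exact and_congr_left' (forall_congr' fun k => by omega)

lemma pathHeight_cons_append_lt_succ_iff {q r : List ℤ} (hq : IsDyckPath q) (h : ℕ) :
    pathHeight (1 :: q ++ -1 :: r) < h + 1 ↔ pathHeight q < h ∧ pathHeight r < h + 1 := by
  have := natCast_pathHeight_cons_append_le_iff hq (r := r) h
  omega

lemma exists_eq_append_neg_one_cons {c : ℤ} (hc : 0 ≤ c) {l : List ℤ}
    (hl : ∀ s ∈ l, s = 1 ∨ s = -1) (hneg : c + l.sum < 0) :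
    ∃ q r, l = q ++ -1 :: r ∧ (∀ k, 0 ≤ c + (q.take k).sum) ∧ c + q.sum = 0 := by
  induction l generalizing c with
  | nil => rw [List.sum_nil] at hneg; omega
  | cons s l ih =>
    by_cases hs : s = -1 ∧ c = 0
    · obtain ⟨rfl, rfl⟩ := hs
      exact ⟨[], l, rfl, by simp, by simp⟩
    · have hcs : 0 ≤ c + s := by rcases hl s (by simp) with h | h <;> omega
      obtain ⟨q, r, rfl, hq, hqs⟩ :=
        ih hcs (fun t ht => hl t (by simp [ht])) (by rw [List.sum_cons] at hneg; omega)
      refine ⟨s :: q, r, rfl, fun k => ?_, by rw [List.sum_cons]; omega⟩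
      cases k with
      | zero => simpa
      | succ k => simpa [add_assoc] using hq k

lemma eq_of_append_neg_one_cons_eq {c : ℤ} {q q' r r' : List ℤ}
    (hq : ∀ k, 0 ≤ c + (q.take k).sum) (hqs : c + q.sum = 0)
    (hq' : ∀ k, 0 ≤ c + (q'.take k).sum) (hqs' : c + q'.sum = 0)
    (h : q ++ -1 :: r = q' ++ -1 :: r') : q = q' ∧ r = r' := by
  induction q generalizing c q' with
  | nil =>
    cases q' with
    | nil => simpa using h
    | cons s q' =>
      obtain ⟨rfl, -⟩ := List.cons.inj h
      have := hq' 1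
      simp only [List.sum_nil, List.take_succ_cons, List.take_zero, List.sum_cons] at hqs this
      omega
  | cons s q ih =>
    cases q' with
    | nil =>
      obtain ⟨rfl, -⟩ := List.cons.inj h
      have := hq 1
      simp only [List.sum_nil, List.take_succ_cons, List.take_zero, List.sum_cons] at hqs' this
      omega
    | cons s' q' =>
      rw [List.cons_append, List.cons_append, List.cons.injEq] at h
      obtain ⟨rfl, h⟩ := h
      obtain ⟨rfl, rfl⟩ := ih (c := c + s) (fun k => by simpa [add_assoc] using hq (k + 1))
        (by rw [List.sum_cons] at hqs; omega) (fun k => by simpa [add_assoc] using hq' (k + 1))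
        (by rw [List.sum_cons] at hqs'; omega) h
      exact ⟨rfl, rfl⟩

lemma IsDyckPath.eq_nil_or_eq_cons_append {p : List ℤ} (hp : IsDyckPath p) :
    p = [] ∨ ∃ q r, IsDyckPath q ∧ IsDyckPath r ∧ p = 1 :: q ++ -1 :: r := by
  rcases p with _ | ⟨s, t⟩
  · exact Or.inl rfl
  right
  have hs : s = 1 := by
    have := hp.2.1 1
    rcases hp.1 s (by simp) with h | h <;> simp_all
  subst hs
  obtain ⟨q, r, rfl, hq, hqs⟩ := exists_eq_append_neg_one_cons le_rfl (l := t)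
    (fun s hs => hp.1 s (by simp [hs])) (by have := hp.2.2; rw [List.sum_cons] at this; omega)
  have hqd : IsDyckPath q :=
    ⟨fun s hs => hp.1 s (by simp [hs]), by simpa using hq, by simpa using hqs⟩
  exact ⟨q, r, hqd, (isDyckPath_cons_append_iff hqd).1 hp, rfl⟩

lemma IsDyckPath.cons_append_inj {q q' r r' : List ℤ} (hq : IsDyckPath q) (hq' : IsDyckPath q')
    (h : 1 :: q ++ -1 :: r = 1 :: q' ++ -1 :: r') : q = q' ∧ r = r' :=
  eq_of_append_neg_one_cons_eq (c := 0) (by simpa using hq.2.1) (by simpa using hq.2.2)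
    (by simpa using hq'.2.1) (by simpa using hq'.2.2) (List.cons.inj h).2

abbrev DyckPathWithHeight (S : ℕ → Prop) : Type :=
  {p : List ℤ // IsDyckPath p ∧ S (pathHeight p)}

noncomputable def dyckSeries (S : ℕ → Prop) : PowerSeries ℤ :=
  countingSeries fun p : DyckPathWithHeight S => p.1.length

lemma finite_dyckPathWithHeight_length_eq (S : ℕ → Prop) (m : ℕ) :
    Finite {p : DyckPathWithHeight S // p.1.length = m} :=
  have := (finite_length_le_pm_one m).to_subtype
  Finite.of_injective (β := {p : List ℤ | p.length ≤ m ∧ ∀ s ∈ p, s = 1 ∨ s = -1})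
    (fun p => ⟨p.1.1, p.2.le, p.1.2.1.1⟩)
    fun _ _ h => Subtype.ext <| Subtype.ext <| by simpa using congrArg Subtype.val h

lemma dyckSeries_or {S T : ℕ → Prop} (hST : ∀ k, S k → ¬ T k) :
    dyckSeries (fun k => S k ∨ T k) = dyckSeries S + dyckSeries T := by
  let f : DyckPathWithHeight S ⊕ DyckPathWithHeight T →
      DyckPathWithHeight fun k => S k ∨ T k :=
    Sum.elim (fun p => ⟨p.1, p.2.1, Or.inl p.2.2⟩) (fun p => ⟨p.1, p.2.1, Or.inr p.2.2⟩)
  have hf : Function.Bijective f := by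
    refine ⟨?_, fun ⟨p, hp, hpST⟩ => hpST.elim (fun h => ⟨.inl ⟨p, hp, h⟩, rfl⟩)
      (fun h => ⟨.inr ⟨p, hp, h⟩, rfl⟩)⟩
    rintro (⟨p, hp⟩ | ⟨p, hp⟩) (⟨p', hp'⟩ | ⟨p', hp'⟩) h <;>
      obtain rfl : p = p' := congrArg Subtype.val h
    · rfl
    · exact absurd hp'.2 (hST _ hp.2)
    · exact absurd hp.2 (hST _ hp'.2)
    · rfl
  have hsize : ∀ x, (Equiv.ofBijective f hf x).1.length =
      Sum.elim (fun p => p.1.length) (fun p => p.1.length) x := by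
    rintro (_ | _) <;> rfl
  exact countingSeries_eq_add (Equiv.ofBijective f hf) hsize
    (finite_dyckPathWithHeight_length_eq _)

lemma dyckSeries_lt_succ (h : ℕ) :
    dyckSeries (· < h + 1) = 1 + X ^ 2 * (dyckSeries (· < h) * dyckSeries (· < h + 1)) := by
  let f : Unit ⊕ (DyckPathWithHeight (· < h) × DyckPathWithHeight (· < h + 1)) →
      DyckPathWithHeight (· < h + 1) :=
    Sum.elim (fun _ => ⟨[], ⟨by simp, by simp, by simp⟩, by simp [pathHeight]⟩)
      fun x => ⟨1 :: x.1.1 ++ -1 :: x.2.1, (isDyckPath_cons_append_iff x.1.2.1).2 x.2.2.1,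
        (pathHeight_cons_append_lt_succ_iff x.1.2.1 h).2 ⟨x.1.2.2, x.2.2.2⟩⟩
  have hf : Function.Bijective f := by
    constructor
    · rintro (⟨⟩ | ⟨q, r⟩) (⟨⟩ | ⟨q', r'⟩) hqr <;> have hqr := congrArg Subtype.val hqr
      · rfl
      · exact absurd hqr.symm (List.cons_ne_nil _ _)
      · exact absurd hqr (List.cons_ne_nil _ _)
      · obtain ⟨hq, hr⟩ := IsDyckPath.cons_append_inj q.2.1 q'.2.1 hqr
        exact congrArg _ (Prod.ext (Subtype.ext hq) (Subtype.ext hr))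
    · rintro ⟨p, hp, hh⟩
      obtain rfl | ⟨q, r, hq, hr, rfl⟩ := hp.eq_nil_or_eq_cons_append
      · exact ⟨.inl (), rfl⟩
      · obtain ⟨hhq, hhr⟩ := (pathHeight_cons_append_lt_succ_iff hq h).1 hh
        exact ⟨.inr (⟨q, hq, hhq⟩, ⟨r, hr, hhr⟩), rfl⟩
  have hsize : ∀ x, (Equiv.ofBijective f hf x).1.length =
      Sum.elim (fun _ => 0) (fun y => (y.1.1.length + y.2.1.length) + 2) x := by
    rintro (_ | _)
    · rfl
    · simp only [Equiv.ofBijective_apply, Sum.elim_inr, f, List.cons_append, List.length_cons,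
        List.length_append]
      ring
  nth_rw 1 [dyckSeries]
  rw [countingSeries_eq_add (Equiv.ofBijective f hf) hsize (finite_dyckPathWithHeight_length_eq _),
    countingSeries_of_unique fun _ => rfl, countingSeries_add_const]
  unfold dyckSeries
  rw [← countingSeries_prod (finite_dyckPathWithHeight_length_eq _)
    (finite_dyckPathWithHeight_length_eq _)]

lemma dyckSeries_eq_sub (h : ℕ) :
    dyckSeries (· = h) = dyckSeries (· < h + 1) - dyckSeries (· < h) := by
  rw [show (· < h + 1) = fun k => k < h ∨ k = h from
    funext fun _ => propext Nat.lt_succ_iff_lt_or_eq, dyckSeries_or fun _ hk => hk.ne]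
  ring

abbrev DyckTuple (L : List ℕ) : Type :=
  {p : Fin L.length → List ℤ // ∀ i, IsDyckPath (p i) ∧ pathHeight (p i) = L.get i}

noncomputable def tupleSeries (L : List ℕ) : PowerSeries ℤ :=
  countingSeries fun p : DyckTuple L => ∑ i, (p.1 i).length

lemma finite_dyckTuple_length_eq (L : List ℕ) (m : ℕ) :
    Finite {p : DyckTuple L // ∑ i, (p.1 i).length = m} :=
  have := (finite_length_le_pm_one m).to_subtype
  Finite.of_injective (β := Fin L.length → {p : List ℤ | p.length ≤ m ∧ ∀ s ∈ p, s = 1 ∨ s = -1})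
    (fun p i => ⟨p.1.1 i, (Finset.single_le_sum (f := fun j => (p.1.1 j).length)
      (fun _ _ => Nat.zero_le _) (Finset.mem_univ i)).trans p.2.le, (p.1.2 i).1.1⟩)
    fun _ _ h => Subtype.ext <| Subtype.ext <| funext fun i => by
      simpa using congrArg Subtype.val (congrFun h i)

def dyckTupleConsEquiv (a : ℕ) (L : List ℕ) :
    DyckTuple (a :: L) ≃ DyckPathWithHeight (· = a) × DyckTuple L where
  toFun p := (⟨p.1 0, p.2 0⟩, ⟨Fin.tail p.1, fun i => p.2 i.succ⟩)
  invFun x := ⟨Fin.cons x.1.1 x.2.1, Fin.cases x.1.2 x.2.2⟩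
  left_inv p := Subtype.ext (Fin.cons_self_tail p.1)
  right_inv _ := rfl

lemma tupleSeries_cons (a : ℕ) (L : List ℕ) :
    tupleSeries (a :: L) = dyckSeries (· = a) * tupleSeries L := by
  rw [tupleSeries, countingSeries_congr (dyckTupleConsEquiv a L).symm
    (sa := fun x => x.1.1.length + ∑ i, (x.2.1 i).length) fun _ => Fin.sum_univ_succ _,
    countingSeries_prod (finite_dyckPathWithHeight_length_eq _) (finite_dyckTuple_length_eq L)]
  rfl

lemma tupleSeries_nil : tupleSeries [] = 1 :=
  have : Unique (DyckTuple []) := ⟨⟨⟨fun i => i.elim0, fun i => i.elim0⟩⟩,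
    fun _ => Subtype.ext (funext fun i => i.elim0)⟩
  countingSeries_of_unique fun _ => Finset.sum_empty

lemma tupleSeries_eq_prod (L : List ℕ) :
    tupleSeries L = (L.map fun h => dyckSeries (· = h)).prod := by
  induction L with
  | nil => exact tupleSeries_nil
  | cons a L ih => rw [tupleSeries_cons, ih, List.map_cons, List.prod_cons]

lemma natCast_P_eq_coeff_tupleSeries (n : ℕ) (L : List ℕ) :
    (P n L : ℤ) = coeff (2 * n) (tupleSeries L) := by
  rw [tupleSeries, coeff_countingSeries, P]
  congr 1
  refine Nat.card_congr ((Equiv.subtypeEquivRight fun p => ?_).trans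
    (Equiv.subtypeSubtypeEquivSubtypeInter
      (fun p : Fin L.length → List ℤ => ∀ i, IsDyckPath (p i) ∧ pathHeight (p i) = L.get i)
      (fun p => ∑ i, (p i).length = 2 * n)).symm)
  have hsum : (∑ i, ((p i).length : ℤ)) = 2 * n ↔ ∑ i, (p i).length = 2 * n := by
    norm_cast
  rw [forall_and, hsum]
  tauto

lemma sub_succ_eq_of_recurrence {R : Type*} [CommRing R] {t : R} {C : ℕ → R}
    (hC : ∀ k, C (k + 1) = 1 + t * C k * C (k + 1)) (h : ℕ) :
    C (h + 2) - C (h + 1) =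
      t * ((C (h + 1) - C h) + 2 * (C (h + 2) - C (h + 1)) + (C (h + 3) - C (h + 2)))
        - t * (C (h + 2) - C (h + 1)) *
          ((C (h + 1) - C h) + (C (h + 2) - C (h + 1)) + (C (h + 3) - C (h + 2))) := by
  have e₁ := hC h
  have e₂ := hC (h + 1)
  have e₃ := hC (h + 2)
  linear_combination (t ^ 2 * C (h + 1) * C (h + 2) - 1 + t) * e₁
    + (t * (C (h + 3) - C h) + 1 - t + t * C (h + 1) - t ^ 2 * C h * C (h + 1)) * e₂
    - (t * C (h + 1)) * e₃

lemma dyckSeries_eq_succ (h : ℕ) :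
    dyckSeries (· = h + 1) =
      X ^ 2 * (dyckSeries (· = h) + 2 * dyckSeries (· = h + 1) + dyckSeries (· = h + 2))
        - X ^ 2 * dyckSeries (· = h + 1) *
          (dyckSeries (· = h) + dyckSeries (· = h + 1) + dyckSeries (· = h + 2)) := by
  simp only [dyckSeries_eq_sub]
  exact sub_succ_eq_of_recurrence (C := fun k => dyckSeries (· < k))
    (fun k => by simpa [mul_assoc] using dyckSeries_lt_succ k) h

lemma tupleSeries_flatMap_replicate (x : ℕ) (l : List (ℕ × ℕ)) :
    tupleSeries (l.flatMap fun q => List.replicate q.1 (x + q.2)) =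
      (l.map fun q => dyckSeries (· = x + q.2) ^ q.1).prod := by
  simp [tupleSeries_eq_prod, List.flatMap_def, List.prod_flatten, Function.comp_def]

noncomputable def qSeries (x : ℕ) (a : List ℕ) : PowerSeries ℤ :=
  tupleSeries (a.zipIdx.flatMap fun q => List.replicate q.1 (x + q.2))

lemma natCast_Qx_eq_coeff_qSeries (n x : ℕ) (a : List ℕ) :
    (Qx n x a : ℤ) = coeff (2 * n) (qSeries x a) :=
  natCast_P_eq_coeff_tupleSeries n _

lemma exists_qSeries_eq (x : ℕ) (l₁ l₂ : List ℕ) : ∃ W, ∀ b c d : ℕ,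
    qSeries x (l₁ ++ b :: c :: d :: l₂) =
      W * dyckSeries (· = x + l₁.length) ^ b * dyckSeries (· = x + l₁.length + 1) ^ c
        * dyckSeries (· = x + l₁.length + 2) ^ d := by
  let E (q : ℕ × ℕ) := dyckSeries (· = x + q.2) ^ q.1
  refine ⟨(l₁.zipIdx.map E).prod * ((l₂.zipIdx (l₁.length + 3)).map E).prod, fun b c d => ?_⟩
  simp only [qSeries, tupleSeries_flatMap_replicate, List.zipIdx_append, List.zipIdx_cons,
    List.map_append, List.map_cons, List.prod_append, List.prod_cons, zero_add, add_assoc,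
    Nat.reduceAdd, E]
  ring

lemma qSeries_eq (x : ℕ) (l₁ l₂ : List ℕ) (b c d : ℕ) (hc : 1 ≤ c) :
    qSeries x (l₁ ++ b :: c :: d :: l₂) =
      X ^ 2 * (2 * qSeries x (l₁ ++ b :: c :: d :: l₂)
        + qSeries x (l₁ ++ (b + 1) :: (c - 1) :: d :: l₂)
        + qSeries x (l₁ ++ b :: (c - 1) :: (d + 1) :: l₂)
        - qSeries x (l₁ ++ (b + 1) :: c :: d :: l₂)
        - qSeries x (l₁ ++ b :: (c + 1) :: d :: l₂)
        - qSeries x (l₁ ++ b :: c :: (d + 1) :: l₂)) := by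
  obtain ⟨W, hW⟩ := exists_qSeries_eq x l₁ l₂
  obtain ⟨c, rfl⟩ : ∃ c', c = c' + 1 := ⟨c - 1, by omega⟩
  simp only [hW, Nat.add_sub_cancel]
  linear_combination (W * dyckSeries (· = x + l₁.length) ^ b
    * dyckSeries (· = x + l₁.length + 1) ^ c * dyckSeries (· = x + l₁.length + 2) ^ d)
    * dyckSeries_eq_succ (x + l₁.length)

lemma natCast_Qx_succ (m x : ℕ) (l₁ l₂ : List ℕ) (b c d : ℕ) (hc : 1 ≤ c) :
    (Qx (m + 1 : ℕ) x (l₁ ++ b :: c :: d :: l₂) : ℤ) =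
      2 * Qx m x (l₁ ++ b :: c :: d :: l₂)
        + Qx m x (l₁ ++ (b + 1) :: (c - 1) :: d :: l₂)
        + Qx m x (l₁ ++ b :: (c - 1) :: (d + 1) :: l₂)
        - Qx m x (l₁ ++ (b + 1) :: c :: d :: l₂)
        - Qx m x (l₁ ++ b :: (c + 1) :: d :: l₂)
        - Qx m x (l₁ ++ b :: c :: (d + 1) :: l₂) := by
  simp only [natCast_Qx_eq_coeff_qSeries]
  conv_lhs => rw [show 2 * (m + 1) = 2 * m + 2 by ring, qSeries_eq x l₁ l₂ b c d hc,
    coeff_X_pow_mul]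
  simp only [two_mul, map_add, map_sub]

lemma P_eq_zero_of_lt_mem {n y : ℕ} {L : List ℕ} (hy : y ∈ L) (hny : n < y) : P n L = 0 := by
  rw [P, Nat.card_eq_zero]
  refine Or.inl ⟨fun ⟨p, hdyck, hsum, hheight⟩ => ?_⟩
  obtain ⟨i, rfl⟩ := List.mem_iff_get.mp hy
  have h₁ := two_mul_pathHeight_le (hdyck i)
  have h₂ : ((p i).length : ℤ) ≤ 2 * n := hsum ▸ Finset.single_le_sum
    (f := fun j => ((p j).length : ℤ)) (fun _ _ => by positivity) (Finset.mem_univ i)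
  rw [hheight i] at h₁
  omega

lemma Qx_self_eq_zero (n : ℕ) (l₁ l₂ : List ℕ) (b c d : ℕ) (hc : 1 ≤ c) :
    Qx n n (l₁ ++ b :: c :: d :: l₂) = 0 :=
  P_eq_zero_of_lt_mem (y := n + (l₁.length + 1))
    (List.mem_flatMap.2 ⟨(c, l₁.length + 1), by simp [List.zipIdx_append],
      List.mem_replicate.2 ⟨by omega, rfl⟩⟩) (by omega)

/-- The tuple `(a₀,…,a_k)` is `l₁ ++ b :: c :: d :: l₂` with `c = aᵢ`; the case `i = k` is
`d = 0`, `l₂ = []`, since trailing zeros do not change `Q`. -/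
theorem grouped_shorten (n : ℕ) (hn : 1 ≤ n)
    (l₁ l₂ : List ℕ) (b c d : ℕ) (hc : 1 ≤ c) :
    (Q (n : ℤ) (l₁ ++ b :: c :: d :: l₂) : ℤ) =
      2 * Q ((n : ℤ) - 1) (l₁ ++ b :: c :: d :: l₂)
        + Q ((n : ℤ) - 1) (l₁ ++ (b + 1) :: (c - 1) :: d :: l₂)
        + Q ((n : ℤ) - 1) (l₁ ++ b :: (c - 1) :: (d + 1) :: l₂)
        - Q ((n : ℤ) - 1) (l₁ ++ (b + 1) :: c :: d :: l₂)
        - Q ((n : ℤ) - 1) (l₁ ++ b :: (c + 1) :: d :: l₂)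
        - Q ((n : ℤ) - 1) (l₁ ++ b :: c :: (d + 1) :: l₂) := by
  obtain ⟨m, rfl⟩ : ∃ m, n = m + 1 := ⟨n - 1, by omega⟩
  have hQ (k : ℕ) (a : List ℕ) : Q k a = ∑ x ∈ Finset.range (k + 1), Qx k x a := by simp [Q]
  rw [show ((m + 1 : ℕ) : ℤ) - 1 = m by push_cast; ring]
  simp only [hQ, Finset.sum_range_succ _ (m + 1), Qx_self_eq_zero _ _ _ _ _ _ hc, add_zero]
  push_cast
  simp only [Finset.mul_sum, ← Finset.sum_add_distrib, ← Finset.sum_sub_distrib]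
  exact Finset.sum_congr rfl fun x _ => natCast_Qx_succ m x l₁ l₂ b c d hc
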